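/- If (W,S) is a Coxeter system of type Λ and α is a reduced expression such that the braid graph B(α) has a vertex λ of degree 3 or more, then λ is contained in a 4-cycle of B(α). -/

import Mathlib

open scoped Classical

namespace Braid

variable {B : Type*}

/-- A Coxeter matrix is *simply laced* if all of its entries are 1, 2 or 3
(in particular, no entry is `0`, which encodes `m(s,t) = ∞`). -/
def SimplyLaced (M : CoxeterMatrix B) : Prop := ∀ s t : B, 1 ≤ M s t ∧ M s t ≤ 3

/-- The Coxeter graph has an edge between `s` and `t` iff `m(s,t) ≥ 3`
(where the entry `0` encodes `∞`). -/
def CoxEdge (M : CoxeterMatrix B) (s t : B) : Prop := M s t = 0 ∨ 3 ≤ M s t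

/-- A Coxeter matrix is *triangle free* if its Coxeter graph contains no three-cycles. -/
def TriangleFree (M : CoxeterMatrix B) : Prop :=
  ∀ s t u : B, ¬ (CoxEdge M s t ∧ CoxEdge M t u ∧ CoxEdge M s u)

/-- A Coxeter system is of *type Λ* if it is simply laced and triangle free. -/
def TypeLambda (M : CoxeterMatrix B) : Prop := SimplyLaced M ∧ TriangleFree M

/-- `y` is obtained from `x` by replacing the factor `s t s` occupying the (0-based)
positions `p, p+1, p+2` by `t s t`, where `m(s,t) = 3`. -/
def BraidMoveAt (M : CoxeterMatrix B) (x y : List B) (p : ℕ) : Prop :=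
  ∃ s t : B, M s t = 3 ∧
    x = x.take p ++ [s, t, s] ++ x.drop (p + 3) ∧
    y = x.take p ++ [t, s, t] ++ x.drop (p + 3)

/-- `x` and `y` differ by a single braid move (applied to `x`). -/
def BraidMove (M : CoxeterMatrix B) (x y : List B) : Prop := ∃ p, BraidMoveAt M x y p

/-- Two words are *braid equivalent* if one is obtained from the other
by a sequence of braid moves. -/
def BraidEquiv (M : CoxeterMatrix B) : List B → List B → Prop :=
  Relation.ReflTransGen (BraidMove M)

/-- The braid class of `α`. -/
def braidClass (M : CoxeterMatrix B) (α : List B) : Set (List B) := {x | BraidEquiv M α x}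

/-- The braid graph of `α`: vertices are the members of the braid class of `α`, with two
vertices adjacent iff they differ by a single braid move. -/
def braidGraph (M : CoxeterMatrix B) (α : List B) : SimpleGraph (braidClass M α) :=
  SimpleGraph.fromRel (fun x y => BraidMove M x.1 y.1)

/-- `c` is the (1-based) center of a braid shadow of `β`; that is, the interval of 1-based
positions `⟦c-1, c+1⟧` is a braid shadow of `β`. -/
def ShadowCenter (M : CoxeterMatrix B) (β : List B) (c : ℕ) : Prop :=
  2 ≤ c ∧ ∃ s t : B, M s t = 3 ∧ β = β.take (c - 2) ++ [s, t, s] ++ β.drop (c + 1)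

/-- The set of (1-based) centers of the braid shadows of the braid class `[α]`. -/
def classCenters (M : CoxeterMatrix B) (α : List B) : Set ℕ :=
  {c | ∃ β ∈ braidClass M α, ShadowCenter M β c}

/-- The dimension of `α`: the number of braid shadows of `[α]`. -/
noncomputable def braidDim (M : CoxeterMatrix B) (α : List B) : ℕ :=
  (classCenters M α).ncard

/-- The (1-based) center of the `i`-th braid shadow of `[α]`, the braid shadows being
numbered `1, …, braidDim M α` from left to right. -/
noncomputable def nthCenter (M : CoxeterMatrix B) (α : List B) (i : ℕ) : ℕ :=
  Nat.nth (· ∈ classCenters M α) (i - 1)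

/-- The `i`-th entry of the signature of `x ∈ [α]`: the letter of `x` appearing in the
center of the `i`-th braid shadow of `[α]`. -/
noncomputable def sig (M : CoxeterMatrix B) (α x : List B) (i : ℕ) : Option B :=
  x[nthCenter M α i - 1]?

/-- `sigbar M α x i` is the set of members of `[α]` whose signature agrees with that of `x`
in position `i`. -/
noncomputable def sigbar (M : CoxeterMatrix B) (α x : List B) (i : ℕ) :
    Set (braidClass M α) :=
  {y | sig M α y.1 i = sig M α x i}

/-- `x` and `y` differ by a single braid move occurring in the `j`-th braid shadow
of `[α]` (i.e. the edge `{x,y}` of the braid graph is labeled by `j`). -/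
noncomputable def EdgeLabeled (M : CoxeterMatrix B) (α x y : List B) (j : ℕ) : Prop :=
  1 ≤ j ∧ j ≤ braidDim M α ∧
    (BraidMoveAt M x y (nthCenter M α j - 2) ∨ BraidMoveAt M y x (nthCenter M α j - 2))

/-- `x` and `y` differ by a single braid move occurring in the braid shadow with
(1-based) center `c`. -/
def MoveAtCenter (M : CoxeterMatrix B) (x y : List B) (c : ℕ) : Prop :=
  BraidMoveAt M x y (c - 2) ∨ BraidMoveAt M y x (c - 2)

/-- `BraidSeq M α js x y` : the list `js` of braid-shadow numbers records a braid sequence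
transforming `x` into `y`, each move being applied in the indicated braid shadow of `[α]`. -/
noncomputable def BraidSeq (M : CoxeterMatrix B) (α : List B) :
    List ℕ → List B → List B → Prop
  | [], x, y => x = y
  | j :: js, x, y => ∃ z, EdgeLabeled M α x z j ∧ BraidSeq M α js z y

/-- A braid sequence from `x` to `y` is *minimal* if no shorter braid sequence from `x`
to `y` exists. -/
noncomputable def MinimalBraidSeq (M : CoxeterMatrix B) (α : List B)
    (js : List ℕ) (x y : List B) : Prop :=
  BraidSeq M α js x y ∧ ∀ ls : List ℕ, BraidSeq M α ls x y → js.length ≤ ls.length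

/-- `Δ(sig(α), sig(β))`: the number of positions at which the signatures of `α` and `β`
differ. -/
noncomputable def sigDelta (M : CoxeterMatrix B) (α β : List B) : ℕ :=
  {i | 1 ≤ i ∧ i ≤ braidDim M α ∧ sig M α α i ≠ sig M α β i}.ncard

/-- A reduced expression is a *link* if it has length 1, or it has odd length `m` and the
braid shadows of its braid class are exactly `⟦1,3⟧, ⟦3,5⟧, …, ⟦m-2,m⟧`
(equivalently, the shadow centers are exactly the even numbers `2, 4, …, m-1`). -/
def IsLink (M : CoxeterMatrix B) (α : List B) : Prop :=
  1 ≤ α.length ∧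
    (α.length = 1 ∨ (Odd α.length ∧
      classCenters M α = {c | Even c ∧ 2 ≤ c ∧ c + 1 ≤ α.length}))

/-- `maj M α β γ i`: the majority among the `i`-th signature entries of `α`, `β`, `γ`. -/
noncomputable def maj (M : CoxeterMatrix B) (α β γ : List B) (i : ℕ) : Option B :=
  if sig M α α i = sig M α β i ∨ sig M α α i = sig M α γ i then sig M α α i
  else sig M α β i

/-- `sigbarPair M α x y`: the set of members of `[α]` whose signature agrees with the
common signature entries of `x` and `y`. -/
noncomputable def sigbarPair (M : CoxeterMatrix B) (α x y : List B) :
    Set (braidClass M α) :=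
  {z | ∀ i : ℕ, 1 ≤ i → i ≤ braidDim M α →
    sig M α x i = sig M α y i → sig M α z.1 i = sig M α x i}

/-! ### Graph-theoretic notions -/

/-- A set `U` of vertices of a graph is *convex* if every vertex on every geodesic
(shortest path) between two vertices of `U` belongs to `U`. -/
def GraphConvex {V : Type*} (G : SimpleGraph V) (U : Set V) : Prop :=
  ∀ u ∈ U, ∀ v ∈ U, ∀ p : G.Walk u v, p.length = G.dist u v → ∀ x ∈ p.support, x ∈ U

/-- The interval `I(u,v)`: the set of vertices lying on some geodesic between `u` and `v`. -/
def interval {V : Type*} (G : SimpleGraph V) (u v : V) : Set V :=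
  {x | ∃ p : G.Walk u v, p.length = G.dist u v ∧ x ∈ p.support}

/-- A connected graph is *median* if any three vertices admit a unique median. -/
def IsMedianGraph {V : Type*} (G : SimpleGraph V) : Prop :=
  G.Connected ∧ ∀ u v w : V,
    ∃! x, x ∈ interval G u v ∩ interval G u w ∩ interval G v w

/-- The hypercube of dimension `n`: vertices are binary strings of length `n`, adjacent
iff they differ in exactly one digit. -/
def hypercube (n : ℕ) : SimpleGraph (Fin n → Bool) :=
  SimpleGraph.fromRel (fun x y => ∃! i, x i ≠ y i)

/-- A graph is a *partial cube* if it admits an isometric embedding into some hypercube. -/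
def IsPartialCube {V : Type*} (G : SimpleGraph V) : Prop :=
  ∃ (n : ℕ) (f : V → Fin n → Bool),
    ∀ u v : V, (hypercube n).dist (f u) (f v) = G.dist u v

/-- The isometric dimension of a graph: the minimal dimension of a hypercube into which it
isometrically embeds. -/
noncomputable def isoDim {V : Type*} (G : SimpleGraph V) : ℕ :=
  sInf {n | ∃ f : V → Fin n → Bool,
    ∀ u v : V, (hypercube n).dist (f u) (f v) = G.dist u v}

/-- The semicube `W_{uv}` : the set of vertices strictly closer to `u` than to `v`. -/
def semicube {V : Type*} (G : SimpleGraph V) (u v : V) : Set V :=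
  {w | G.dist w u < G.dist w v}

/-!
Two distinct braid moves out of a reduced word are applied at positions at least two apart:
equal positions give equal results, and positions one apart force a factor `s t s t`, which is
not reduced when `m(s,t) = 3`. Among three such positions two are at least three apart, so the
corresponding factors `s t s` are disjoint, the two moves commute, and together with their
composite they span a square in the braid graph.
-/

section BraidMoves

variable {W : Type*} [Group W] {M : CoxeterMatrix B}

theorem _root_.CoxeterSystem.IsReduced.of_infix {cs : CoxeterSystem M W} {ω ω' : List B}
    (hω : cs.IsReduced ω) (h : ω' <:+: ω) : cs.IsReduced ω' := by
  obtain ⟨A, C, rfl⟩ := h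
  simpa [List.append_assoc] using (hω.drop A.length).take ω'.length

theorem _root_.CoxeterSystem.wordProd_sts_eq_tst (cs : CoxeterSystem M W) {s t : B}
    (h : M s t = 3) : cs.wordProd [s, t, s] = cs.wordProd [t, s, t] := by
  have := cs.wordProd_braidWord_eq t s
  rwa [CoxeterSystem.braidWord, CoxeterSystem.braidWord, M.symmetric, h] at this

theorem _root_.CoxeterSystem.not_isReduced_stst (cs : CoxeterSystem M W) {s t : B}
    (h : M s t = 3) : ¬ cs.IsReduced [s, t, s, t] :=
  cs.not_isReduced_alternatingWord s t (m := 4) (by omega) (by omega)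

theorem braidMoveAt_append {s t : B} (h : M s t = 3) (A C : List B) :
    BraidMoveAt M (A ++ [s, t, s] ++ C) (A ++ [t, s, t] ++ C) A.length := by
  have hA : (A ++ [s, t, s] ++ C).take A.length = A := by simp
  have hC : (A ++ [s, t, s] ++ C).drop (A.length + 3) = C := by simp
  exact ⟨s, t, h, by rw [hA, hC], by rw [hA, hC]⟩

theorem braidMoveAt_iff {x y : List B} {p : ℕ} :
    BraidMoveAt M x y p ↔ ∃ (s t : B) (A C : List B), M s t = 3 ∧ A.length = p ∧
      x = A ++ [s, t, s] ++ C ∧ y = A ++ [t, s, t] ++ C := by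
  constructor
  · rintro ⟨s, t, h, hx, hy⟩
    have hlen : p + 3 ≤ x.length := by
      have := congrArg List.length hx
      simp at this
      omega
    exact ⟨s, t, x.take p, x.drop (p + 3), h, by simp; omega, hx, hy⟩
  · rintro ⟨s, t, A, C, h, rfl, rfl, rfl⟩
    exact braidMoveAt_append h A C

theorem BraidMoveAt.symm {x y : List B} {p : ℕ} (h : BraidMoveAt M x y p) :
    BraidMoveAt M y x p := by
  obtain ⟨s, t, A, C, h3, rfl, rfl, rfl⟩ := braidMoveAt_iff.1 h
  exact braidMoveAt_append (M.symmetric s t ▸ h3) A C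

theorem BraidMoveAt.right_unique {x y z : List B} {p : ℕ} (hy : BraidMoveAt M x y p)
    (hz : BraidMoveAt M x z p) : y = z := by
  obtain ⟨s, t, -, hx, rfl⟩ := hy
  obtain ⟨u, v, -, hx', rfl⟩ := hz
  have := hx.symm.trans hx'
  simp only [List.append_assoc, List.append_cancel_left_eq] at this
  obtain ⟨rfl, rfl, -⟩ := this
  rfl

theorem BraidMoveAt.getElem?_ne {x y : List B} {p : ℕ} (h : BraidMoveAt M x y p) :
    x[p]? ≠ y[p]? := by
  obtain ⟨s, t, A, C, h3, rfl, rfl, rfl⟩ := braidMoveAt_iff.1 h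
  have hst : s ≠ t := by rintro rfl; simp at h3
  simpa [List.getElem?_append_right] using hst

theorem BraidMoveAt.ne {x y : List B} {p : ℕ} (h : BraidMoveAt M x y p) : x ≠ y :=
  fun hxy => h.getElem?_ne (hxy ▸ rfl)

theorem BraidMoveAt.getElem?_eq_of_lt {x y : List B} {p i : ℕ} (h : BraidMoveAt M x y p)
    (hi : i < p) : x[i]? = y[i]? := by
  obtain ⟨s, t, A, C, -, rfl, rfl, rfl⟩ := braidMoveAt_iff.1 h
  simp [List.getElem?_append_left hi]

theorem BraidMoveAt.diamond_of_add_three_le {l x y : List B} {p q : ℕ} (hx : BraidMoveAt M l x p)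
    (hy : BraidMoveAt M l y q) (hpq : p + 3 ≤ q) :
    ∃ z, BraidMoveAt M x z q ∧ BraidMoveAt M y z p := by
  obtain ⟨s, t, A, C, hst, rfl, rfl, rfl⟩ := braidMoveAt_iff.1 hx
  obtain ⟨u, v, A', C', huv, rfl, hl, rfl⟩ := braidMoveAt_iff.1 hy
  obtain ⟨D, rfl, rfl⟩ : ∃ D, A' = A ++ [s, t, s] ++ D ∧ C = D ++ [u, v, u] ++ C' := by
    rw [List.append_assoc A'] at hl
    rcases List.append_eq_append_iff.1 hl with ⟨D, hA', hC⟩ | ⟨D, hA, hC⟩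
    · exact ⟨D, hA', by simp [hC]⟩
    · obtain rfl : D = [] := by
        have := congrArg List.length hA
        simp at this
        exact List.eq_nil_of_length_eq_zero (by omega)
      exact ⟨[], by simpa using hA.symm, by simpa using hC.symm⟩
  refine ⟨A ++ [t, s, t] ++ D ++ [v, u, v] ++ C', ?_, ?_⟩
  · simpa using braidMoveAt_append huv (A ++ [t, s, t] ++ D) C'
  · simpa using braidMoveAt_append hst A (D ++ [v, u, v] ++ C')

theorem BraidMove.wordProd_eq (cs : CoxeterSystem M W) {x y : List B}
    (h : BraidMove M x y) : cs.wordProd x = cs.wordProd y := by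
  obtain ⟨p, h⟩ := h
  obtain ⟨s, t, A, C, h3, -, rfl, rfl⟩ := braidMoveAt_iff.1 h
  simp only [cs.wordProd_append, cs.wordProd_sts_eq_tst h3]

theorem BraidMove.length_eq {x y : List B} (h : BraidMove M x y) : x.length = y.length := by
  obtain ⟨p, h⟩ := h
  obtain ⟨s, t, A, C, -, -, rfl, rfl⟩ := braidMoveAt_iff.1 h
  simp

theorem BraidEquiv.isReduced {cs : CoxeterSystem M W} {x y : List B}
    (h : BraidEquiv M x y) (hx : cs.IsReduced x) : cs.IsReduced y := by
  induction h with
  | refl => exact hx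
  | tail _ hmove ih =>
    rwa [CoxeterSystem.IsReduced, ← hmove.wordProd_eq, ← hmove.length_eq]

theorem BraidMoveAt.not_isReduced_of_succ (cs : CoxeterSystem M W)
    {l x y : List B} {p : ℕ} (hx : BraidMoveAt M l x p) (hy : BraidMoveAt M l y (p + 1)) :
    ¬ cs.IsReduced l := by
  obtain ⟨s, t, A, C, h3, rfl, rfl, -⟩ := braidMoveAt_iff.1 hx
  obtain ⟨u, v, A', C', -, hA', hl, -⟩ := braidMoveAt_iff.1 hy
  have hl' : (A ++ [s]) ++ t :: s :: C = A' ++ u :: v :: u :: C' := by simpa using hl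
  obtain ⟨-, h⟩ := List.append_inj hl' (by simp [hA'])
  simp only [List.cons.injEq] at h
  obtain ⟨rfl, rfl, rfl⟩ := h
  exact fun hred => cs.not_isReduced_stst h3 (hred.of_infix ⟨A, C', by simp⟩)

theorem BraidMoveAt.add_two_le_or_add_two_le {cs : CoxeterSystem M W}
    {l x y : List B} {p q : ℕ} (hl : cs.IsReduced l) (hx : BraidMoveAt M l x p)
    (hy : BraidMoveAt M l y q) (hxy : x ≠ y) : p + 2 ≤ q ∨ q + 2 ≤ p := by
  have hpq : p ≠ q := by
    rintro rfl
    exact hxy (hx.right_unique hy)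
  have hsucc : ∀ {a b : List B} {n}, BraidMoveAt M l a n → ¬ BraidMoveAt M l b (n + 1) :=
    fun ha hb => ha.not_isReduced_of_succ cs hb hl
  have : q ≠ p + 1 := by rintro rfl; exact hsucc hx hy
  have : p ≠ q + 1 := by rintro rfl; exact hsucc hy hx
  omega

end BraidMoves

section BraidGraph

variable {M : CoxeterMatrix B} {α : List B}

theorem braidGraph_adj_of_braidMoveAt {x y : braidClass M α} {p : ℕ}
    (h : BraidMoveAt M x.1 y.1 p) : (braidGraph M α).Adj x y :=
  (SimpleGraph.fromRel_adj _ _ _).2 ⟨fun hxy => h.ne (congrArg Subtype.val hxy), Or.inl ⟨p, h⟩⟩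

theorem exists_braidMoveAt_of_braidGraph_adj {x y : braidClass M α}
    (h : (braidGraph M α).Adj x y) : ∃ p, BraidMoveAt M x.1 y.1 p := by
  obtain ⟨-, ⟨p, h⟩ | ⟨p, h⟩⟩ := (SimpleGraph.fromRel_adj _ _ _).1 h
  exacts [⟨p, h⟩, ⟨p, h.symm⟩]

theorem exists_four_cycle_of_braidMoveAt {lam x y : braidClass M α} {p q : ℕ}
    (hx : BraidMoveAt M lam.1 x.1 p) (hy : BraidMoveAt M lam.1 y.1 q)
    (hfar : p + 3 ≤ q ∨ q + 3 ≤ p) :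
    ∃ u v w : braidClass M α,
      (braidGraph M α).Adj lam u ∧ (braidGraph M α).Adj u v ∧
      (braidGraph M α).Adj v w ∧ (braidGraph M α).Adj w lam ∧
      lam ≠ v ∧ u ≠ w := by
  wlog hpq : p + 3 ≤ q generalizing x y p q
  · obtain ⟨u, v, w, hu, huv, hvw, hw, hlv, huw⟩ := this hy hx hfar.symm (by omega)
    exact ⟨w, v, u, hw.symm, hvw.symm, huv.symm, hu.symm, hlv, huw.symm⟩
  obtain ⟨z, hxz, hyz⟩ := hx.diamond_of_add_three_le hy hpq
  let z' : braidClass M α := ⟨z, x.2.tail ⟨q, hxz⟩⟩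
  refine ⟨x, z', y, braidGraph_adj_of_braidMoveAt hx,
    braidGraph_adj_of_braidMoveAt (y := z') hxz, (braidGraph_adj_of_braidMoveAt (x := y) hyz).symm,
    (braidGraph_adj_of_braidMoveAt hy).symm, fun h => ?_, fun h => ?_⟩
  · exact hx.getElem?_ne (by rw [hxz.getElem?_eq_of_lt (by omega), h])
  · exact hx.getElem?_ne (by rw [hy.getElem?_eq_of_lt (by omega), h])

end BraidGraph

theorem degree_three_vertex_in_four_cycle_general
    {B W : Type*} [Group W] (M : CoxeterMatrix B) (cs : CoxeterSystem M W)
    (α : List B) (hα : cs.IsReduced α)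
    (lam x₁ x₂ x₃ : braidClass M α)
    (h12 : x₁ ≠ x₂) (h13 : x₁ ≠ x₃) (h23 : x₂ ≠ x₃)
    (h1 : (braidGraph M α).Adj lam x₁) (h2 : (braidGraph M α).Adj lam x₂)
    (h3 : (braidGraph M α).Adj lam x₃) :
    ∃ u v w : braidClass M α,
      (braidGraph M α).Adj lam u ∧ (braidGraph M α).Adj u v ∧
      (braidGraph M α).Adj v w ∧ (braidGraph M α).Adj w lam ∧
      lam ≠ v ∧ u ≠ w := by
  obtain ⟨p₁, hm₁⟩ := exists_braidMoveAt_of_braidGraph_adj h1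
  obtain ⟨p₂, hm₂⟩ := exists_braidMoveAt_of_braidGraph_adj h2
  obtain ⟨p₃, hm₃⟩ := exists_braidMoveAt_of_braidGraph_adj h3
  have hred : cs.IsReduced lam.1 := BraidEquiv.isReduced lam.2 hα
  have d₁₂ := hm₁.add_two_le_or_add_two_le hred hm₂ (Subtype.val_injective.ne h12)
  have d₁₃ := hm₁.add_two_le_or_add_two_le hred hm₃ (Subtype.val_injective.ne h13)
  have d₂₃ := hm₂.add_two_le_or_add_two_le hred hm₃ (Subtype.val_injective.ne h23)
  rcases (by omega : (p₁ + 3 ≤ p₂ ∨ p₂ + 3 ≤ p₁) ∨ (p₁ + 3 ≤ p₃ ∨ p₃ + 3 ≤ p₁) ∨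
      (p₂ + 3 ≤ p₃ ∨ p₃ + 3 ≤ p₂)) with h | h | h
  exacts [exists_four_cycle_of_braidMoveAt hm₁ hm₂ h, exists_four_cycle_of_braidMoveAt hm₁ hm₃ h,
    exists_four_cycle_of_braidMoveAt hm₂ hm₃ h]

theorem degree_three_vertex_in_four_cycle
    {B W : Type*} [Group W] (M : CoxeterMatrix B) (cs : CoxeterSystem M W)
    (hM : TypeLambda M) (α : List B) (hα : cs.IsReduced α)
    (lam x₁ x₂ x₃ : braidClass M α)
    (h12 : x₁ ≠ x₂) (h13 : x₁ ≠ x₃) (h23 : x₂ ≠ x₃)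
    (h1 : (braidGraph M α).Adj lam x₁) (h2 : (braidGraph M α).Adj lam x₂)
    (h3 : (braidGraph M α).Adj lam x₃) :
    ∃ u v w : braidClass M α,
      (braidGraph M α).Adj lam u ∧ (braidGraph M α).Adj u v ∧
      (braidGraph M α).Adj v w ∧ (braidGraph M α).Adj w lam ∧
      lam ≠ v ∧ u ≠ w :=
  degree_three_vertex_in_four_cycle_general M cs α hα lam x₁ x₂ x₃ h12 h13 h23 h1 h2 h3

end Braid
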